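/- arXiv:2002.07926 — 3 statements merged into one kernel-verified Lean document; each statement's English description precedes it below -/
import Mathlib

section
/- Let (A₀, ⟪·,·⟫₁) and (B₀, ⟪·,·⟫₂) be unital Hilbert algebras over ℂ. Endow the algebraic tensor product A₀ ⊗[ℂ] B₀ with the tensor product *-algebra structure and with the sesquilinear form B determined by B(x ⊗ y, x' ⊗ y') = ⟪x, x'⟫₁⟪y, y'⟫₂. Then A₀ ⊗[ℂ] B₀ is again a unital Hilbert algebra; that is: B is a Hermitian, positive-definite inner product on A₀ ⊗[ℂ] B₀, and with respect to the norm ‖·‖_B induced by B one has (1) for every z ∈ A₀ ⊗[ℂ] B₀ the left multiplication map w ↦ zw is continuous, (2) B(zw, v) = B(w, z*v) for all z, w, v, (3) B(z, w) = B(w*, z*) for all z, w, and (4) the linear span of products {zw : z, w ∈ A₀ ⊗[ℂ] B₀} is ‖·‖_B-dense in A₀ ⊗[ℂ] B₀. -/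
/-!
The cores make `A` and `B` inner product spaces, and Mathlib's inner product on `A ⊗[ℂ] B` is
biadditive with the same values as `Bf` on pure tensors, so `Bf` *is* that inner product; this
gives hermitian symmetry, positivity and definiteness. Left multiplication by `a ⊗ₜ b` is the
tensor product of the left multiplications by `a` and `b`, hence bounded, and adjoint to left
multiplication by `a⋆ ⊗ₜ b⋆`; (1) and (2) follow by additivity in the left factor, and (3)
likewise reduces to pure tensors. Finally the span of products contains `p ⊗ₜ q` for `p`, `q` in
the (dense) spans of products of the factors, and these are dense because `⊗ₜ` is jointly
continuous.
-/

open scoped TensorProduct ComplexConjugate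

namespace TensorProduct

section Additive

variable {R M N P Q G : Type*} [CommSemiring R] [AddCommMonoid M] [AddCommMonoid N]
  [AddCommMonoid P] [AddCommMonoid Q] [Module R M] [Module R N] [Module R P] [Module R Q]
  [AddCommGroup G]

theorem funext_of_map_add {f g : M ⊗[R] N → G} (hf : ∀ z w, f (z + w) = f z + f w)
    (hg : ∀ z w, g (z + w) = g z + g w) (h : ∀ x y, f (x ⊗ₜ y) = g (x ⊗ₜ y)) : f = g := by
  funext z
  induction z using TensorProduct.induction_on with
  | zero => exact (AddMonoidHom.mk' f hf).map_zero.trans (AddMonoidHom.mk' g hg).map_zero.symm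
  | tmul x y => exact h x y
  | add z w hz hw => rw [hf, hg, hz, hw]

theorem funext₂_of_map_add {f g : M ⊗[R] N → P ⊗[R] Q → G}
    (hf₁ : ∀ z z' w, f (z + z') w = f z w + f z' w) (hf₂ : ∀ z w w', f z (w + w') = f z w + f z w')
    (hg₁ : ∀ z z' w, g (z + z') w = g z w + g z' w) (hg₂ : ∀ z w w', g z (w + w') = g z w + g z w')
    (h : ∀ x y x' y', f (x ⊗ₜ y) (x' ⊗ₜ y') = g (x ⊗ₜ y) (x' ⊗ₜ y')) : f = g := by
  have htmul : ∀ x y, f (x ⊗ₜ y) = g (x ⊗ₜ y) := fun x y =>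
    funext_of_map_add (hf₂ _) (hg₂ _) (h x y)
  funext z w
  exact congrFun (funext_of_map_add (f := (f · w)) (g := (g · w)) (hf₁ · · w) (hg₁ · · w)
    fun x y => congrFun (htmul x y) w) z

end Additive

theorem continuous_apply_of_continuous_tmul {R M N P Q : Type*} [CommSemiring R]
    [AddCommMonoid M] [AddCommMonoid N] [Module R M] [Module R N]
    [AddCommMonoid P] [Module R P] [TopologicalSpace P]
    [AddCommMonoid Q] [Module R Q] [TopologicalSpace Q] [ContinuousAdd Q]
    (T : M ⊗[R] N →ₗ[R] P →ₗ[R] Q) (h : ∀ x y, Continuous (T (x ⊗ₜ y))) (z : M ⊗[R] N) :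
    Continuous (T z) := by
  induction z using TensorProduct.induction_on with
  | zero => rw [map_zero]; exact continuous_zero
  | tmul x y => exact h x y
  | add z w hz hw => rw [map_add]; exact hz.add hw

variable {𝕜 E F E' F' : Type*} [RCLike 𝕜]
  [NormedAddCommGroup E] [InnerProductSpace 𝕜 E] [NormedAddCommGroup F] [InnerProductSpace 𝕜 F]
  [NormedAddCommGroup E'] [InnerProductSpace 𝕜 E'] [NormedAddCommGroup F'] [InnerProductSpace 𝕜 F']

theorem inner_map_map_eq_of_adjoint {f : E →ₗ[𝕜] E'} {f' : E' →ₗ[𝕜] E} {g : F →ₗ[𝕜] F'}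
    {g' : F' →ₗ[𝕜] F} (hf : ∀ x y, inner 𝕜 (f x) y = inner 𝕜 x (f' y))
    (hg : ∀ x y, inner 𝕜 (g x) y = inner 𝕜 x (g' y)) (z : E ⊗[𝕜] F) (w : E' ⊗[𝕜] F') :
    inner 𝕜 (map f g z) w = inner 𝕜 z (map f' g' w) := by
  refine congrFun (congrFun (funext₂_of_map_add (f := fun z w => inner 𝕜 (map f g z) w)
    (g := fun z w => inner 𝕜 z (map f' g' w)) ?_ ?_ ?_ ?_ ?_) z) w
  all_goals intros; simp [inner_add_left, inner_add_right, hf, hg]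

theorem inner_eq_inner_swap_of_tmul {sE : E → E} {sF : F → F}
    (hsE : ∀ x y, inner 𝕜 x y = inner 𝕜 (sE y) (sE x))
    (hsF : ∀ x y, inner 𝕜 x y = inner 𝕜 (sF y) (sF x)) {s : E ⊗[𝕜] F → E ⊗[𝕜] F}
    (hs_add : ∀ z w, s (z + w) = s z + s w) (hs_tmul : ∀ x y, s (x ⊗ₜ y) = sE x ⊗ₜ sF y)
    (z w : E ⊗[𝕜] F) : inner 𝕜 z w = inner 𝕜 (s w) (s z) := by
  refine congrFun (congrFun (funext₂_of_map_add (f := inner 𝕜)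
    (g := fun z w => inner 𝕜 (s w) (s z)) ?_ ?_ ?_ ?_ ?_) z) w
  all_goals intros; simp [inner_add_left, inner_add_right, hs_add, hs_tmul, ← hsE, ← hsF]

theorem dense_map₂_mk {p : Submodule 𝕜 E} {q : Submodule 𝕜 F} (hp : Dense (p : Set E))
    (hq : Dense (q : Set F)) : Dense (Submodule.map₂ (mk 𝕜 E F) p q : Set (E ⊗[𝕜] F)) := by
  rw [Submodule.dense_iff_topologicalClosure_eq_top, eq_top_iff, ← span_tmul_eq_top,
    Submodule.span_le]
  rintro _ ⟨x, y, rfl⟩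
  exact map_mem_closure (f := fun u : E × F => u.1 ⊗ₜ[𝕜] u.2) continuous_tmul
    ((hp.prod hq).closure_eq ▸ Set.mem_univ (x, y))
    fun u hu => Submodule.apply_mem_map₂ (mk 𝕜 E F) hu.1 hu.2

end TensorProduct

theorem dense_iff_forall_exists_norm_sub_lt {E : Type*} [SeminormedAddCommGroup E] {s : Set E} :
    Dense s ↔ ∀ a, ∀ ε : ℝ, 0 < ε → ∃ b ∈ s, ‖a - b‖ < ε := by
  simp only [Metric.dense_iff, Set.Nonempty, Set.mem_inter_iff, Metric.mem_ball, dist_eq_norm_sub',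
    gt_iff_lt, and_comm]

theorem Algebra.TensorProduct.map₂_mk_span_mul_le {R A B : Type*} [CommSemiring R] [Semiring A]
    [Algebra R A] [Semiring B] [Algebra R B] :
    Submodule.map₂ (TensorProduct.mk R A B) (Submodule.span R {p : A | ∃ x y, p = x * y})
        (Submodule.span R {p : B | ∃ x y, p = x * y}) ≤
      Submodule.span R {p : A ⊗[R] B | ∃ z z', p = z * z'} := by
  rw [Submodule.map₂_span_span, Submodule.span_le]
  rintro _ ⟨_, ⟨x, y, rfl⟩, _, ⟨u, v, rfl⟩, rfl⟩
  exact Submodule.subset_span ⟨x ⊗ₜ u, y ⊗ₜ v, (Algebra.TensorProduct.tmul_mul_tmul ..).symm⟩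

theorem stmt_0_general
    {A B : Type*}
    [Ring A] [Algebra ℂ A] [StarRing A]
    [Ring B] [Algebra ℂ B] [StarRing B]
    -- the inner products of the two unital Hilbert algebras
    (cA : InnerProductSpace.Core ℂ A) (cB : InnerProductSpace.Core ℂ B)
    -- Hilbert algebra axiom (1): left multiplications are continuous (bounded)
    (hA1 : ∀ x : A, ∃ C : ℝ, 0 ≤ C ∧ ∀ y : A,
      Real.sqrt (cA.inner (x * y) (x * y)).re ≤ C * Real.sqrt (cA.inner y y).re)
    (hB1 : ∀ x : B, ∃ C : ℝ, 0 ≤ C ∧ ∀ y : B,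
      Real.sqrt (cB.inner (x * y) (x * y)).re ≤ C * Real.sqrt (cB.inner y y).re)
    -- Hilbert algebra axiom (2): ⟪xy, z⟫ = ⟪y, x*z⟫
    (hA2 : ∀ x y z : A, cA.inner (x * y) z = cA.inner y (star x * z))
    (hB2 : ∀ x y z : B, cB.inner (x * y) z = cB.inner y (star x * z))
    -- Hilbert algebra axiom (3): ⟪x, y⟫ = ⟪y*, x*⟫
    (hA3 : ∀ x y : A, cA.inner x y = cA.inner (star y) (star x))
    (hB3 : ∀ x y : B, cB.inner x y = cB.inner (star y) (star x))
    -- Hilbert algebra axiom (4): the span of products is dense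
    (hA4 : ∀ a : A, ∀ ε : ℝ, 0 < ε → ∃ b ∈ Submodule.span ℂ {p : A | ∃ x y : A, p = x * y},
      Real.sqrt (cA.inner (a - b) (a - b)).re < ε)
    (hB4 : ∀ a : B, ∀ ε : ℝ, 0 < ε → ∃ b ∈ Submodule.span ℂ {p : B | ∃ x y : B, p = x * y},
      Real.sqrt (cB.inner (a - b) (a - b)).re < ε)
    -- the involution of the tensor product *-algebra `A ⊗[ℂ] B`
    (st : A ⊗[ℂ] B → A ⊗[ℂ] B)
    (st_add : ∀ z w : A ⊗[ℂ] B, st (z + w) = st z + st w)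
    (st_tmul : ∀ (x : A) (y : B), st (x ⊗ₜ[ℂ] y) = star x ⊗ₜ[ℂ] star y)
    -- the sesquilinear form `Bf` on `A ⊗[ℂ] B` determined by the inner products of the factors
    (Bf : A ⊗[ℂ] B → A ⊗[ℂ] B → ℂ)
    (Bf_add_left : ∀ z z' w : A ⊗[ℂ] B, Bf (z + z') w = Bf z w + Bf z' w)
    (Bf_add_right : ∀ z w w' : A ⊗[ℂ] B, Bf z (w + w') = Bf z w + Bf z w')
    (Bf_tmul : ∀ (x x' : A) (y y' : B),
      Bf (x ⊗ₜ[ℂ] y) (x' ⊗ₜ[ℂ] y') = cA.inner x x' * cB.inner y y') :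
    -- `Bf` is a Hermitian, positive-definite inner product on `A ⊗[ℂ] B`:
    (∀ z w : A ⊗[ℂ] B, conj (Bf w z) = Bf z w) ∧
    (∀ z : A ⊗[ℂ] B, 0 ≤ (Bf z z).re) ∧
    (∀ z : A ⊗[ℂ] B, Bf z z = 0 → z = 0) ∧
    -- (1) every left multiplication is bounded for the norm induced by `Bf`:
    (∀ z : A ⊗[ℂ] B, ∃ C : ℝ, 0 ≤ C ∧ ∀ w : A ⊗[ℂ] B,
      Real.sqrt (Bf (z * w) (z * w)).re ≤ C * Real.sqrt (Bf w w).re) ∧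
    -- (2) `Bf (z*w) v = Bf w (z* * v)`:
    (∀ z w v : A ⊗[ℂ] B, Bf (z * w) v = Bf w (st z * v)) ∧
    -- (3) `Bf z w = Bf w* z*`:
    (∀ z w : A ⊗[ℂ] B, Bf z w = Bf (st w) (st z)) ∧
    -- (4) the linear span of products is dense for the norm induced by `Bf`:
    (∀ ζ : A ⊗[ℂ] B, ∀ ε : ℝ, 0 < ε →
      ∃ w ∈ Submodule.span ℂ {p : A ⊗[ℂ] B | ∃ z z' : A ⊗[ℂ] B, p = z * z'},
        Real.sqrt (Bf (ζ - w) (ζ - w)).re < ε) := by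
  let _ : NormedAddCommGroup A := cA.toNormedAddCommGroup
  let _ : InnerProductSpace ℂ A := .ofCore cA.toCore
  let _ : NormedAddCommGroup B := cB.toNormedAddCommGroup
  let _ : InnerProductSpace ℂ B := .ofCore cB.toCore
  obtain rfl : Bf = inner ℂ := TensorProduct.funext₂_of_map_add Bf_add_left Bf_add_right
    inner_add_left inner_add_right fun x y x' y' => Bf_tmul x x' y y'
  have hmulA (a : A) : Continuous (LinearMap.mulLeft ℂ a) :=
    let ⟨C, _, hC⟩ := hA1 a; AddMonoidHomClass.continuous_of_bound _ C hC
  have hmulB (b : B) : Continuous (LinearMap.mulLeft ℂ b) :=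
    let ⟨C, _, hC⟩ := hB1 b; AddMonoidHomClass.continuous_of_bound _ C hC
  have hmul (z : A ⊗[ℂ] B) : Continuous (LinearMap.mulLeft ℂ z) :=
    TensorProduct.continuous_apply_of_continuous_tmul (LinearMap.mul ℂ _) (fun a b => by
      change Continuous (LinearMap.mulLeft ℂ (a ⊗ₜ[ℂ] b))
      rw [LinearMap.mulLeft_tmul]
      exact (TensorProduct.mapL ⟨_, hmulA a⟩ ⟨_, hmulB b⟩).continuous.congr
        (TensorProduct.mapL_apply _ _)) z
  refine ⟨fun z w => inner_conj_symm (𝕜 := ℂ) z w, fun z => inner_self_nonneg (𝕜 := ℂ) (x := z),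
    fun z => (inner_self_eq_zero (x := z)).1,
    fun z => let ⟨C, hC, hbound⟩ := SemilinearMapClass.bound_of_continuous _ (hmul z)
      ⟨C, hC.le, hbound⟩, fun z w v => ?_,
    TensorProduct.inner_eq_inner_swap_of_tmul hA3 hB3 st_add st_tmul,
    dense_iff_forall_exists_norm_sub_lt.1 ?_⟩
  · refine congrFun (TensorProduct.funext_of_map_add (f := fun z => inner ℂ (z * w) v)
      (g := fun z => inner ℂ w (st z * v)) (fun _ _ => by simp only [add_mul, inner_add_left])
      (fun _ _ => by simp only [st_add, add_mul, inner_add_right]) fun a b => ?_) z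
    simp only [st_tmul, ← LinearMap.mulLeft_apply (R := ℂ), LinearMap.mulLeft_tmul]
    exact TensorProduct.inner_map_map_eq_of_adjoint (hA2 a) (hB2 b) w v
  · exact (TensorProduct.dense_map₂_mk (dense_iff_forall_exists_norm_sub_lt.2 hA4)
      (dense_iff_forall_exists_norm_sub_lt.2 hB4)).mono Algebra.TensorProduct.map₂_mk_span_mul_le

/-- Let `(A, ⟪·,·⟫₁)` and `(B, ⟪·,·⟫₂)` be unital Hilbert algebras over `ℂ`.
Endow the algebraic tensor product `A ⊗[ℂ] B` with the tensor product *-algebra structure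
(involution `st` determined by `(x ⊗ y)* = x* ⊗ y*` and additivity) and with the sesquilinear
form `Bf` determined by `Bf (x ⊗ y) (x' ⊗ y') = ⟪x, x'⟫₁ * ⟪y, y'⟫₂`.  Then `A ⊗[ℂ] B` is
again a unital Hilbert algebra: `Bf` is a Hermitian positive-definite inner product, and with
respect to the induced norm `‖z‖_B = √(Bf z z).re` one has (1) every left multiplication
`w ↦ z * w` is continuous (bounded), (2) `Bf (z*w) v = Bf w (z* * v)`, (3) `Bf z w = Bf w* z*`,
and (4) the linear span of products is `‖·‖_B`-dense in `A ⊗[ℂ] B`. -/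
theorem stmt_0
    {A B : Type*}
    [Ring A] [Algebra ℂ A] [StarRing A] [StarModule ℂ A]
    [Ring B] [Algebra ℂ B] [StarRing B] [StarModule ℂ B]
    -- the inner products of the two unital Hilbert algebras
    (cA : InnerProductSpace.Core ℂ A) (cB : InnerProductSpace.Core ℂ B)
    -- Hilbert algebra axiom (1): left multiplications are continuous (bounded)
    (hA1 : ∀ x : A, ∃ C : ℝ, 0 ≤ C ∧ ∀ y : A,
      Real.sqrt (cA.inner (x * y) (x * y)).re ≤ C * Real.sqrt (cA.inner y y).re)
    (hB1 : ∀ x : B, ∃ C : ℝ, 0 ≤ C ∧ ∀ y : B,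
      Real.sqrt (cB.inner (x * y) (x * y)).re ≤ C * Real.sqrt (cB.inner y y).re)
    -- Hilbert algebra axiom (2): ⟪xy, z⟫ = ⟪y, x*z⟫
    (hA2 : ∀ x y z : A, cA.inner (x * y) z = cA.inner y (star x * z))
    (hB2 : ∀ x y z : B, cB.inner (x * y) z = cB.inner y (star x * z))
    -- Hilbert algebra axiom (3): ⟪x, y⟫ = ⟪y*, x*⟫
    (hA3 : ∀ x y : A, cA.inner x y = cA.inner (star y) (star x))
    (hB3 : ∀ x y : B, cB.inner x y = cB.inner (star y) (star x))
    -- Hilbert algebra axiom (4): the span of products is dense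
    (hA4 : ∀ a : A, ∀ ε : ℝ, 0 < ε → ∃ b ∈ Submodule.span ℂ {p : A | ∃ x y : A, p = x * y},
      Real.sqrt (cA.inner (a - b) (a - b)).re < ε)
    (hB4 : ∀ a : B, ∀ ε : ℝ, 0 < ε → ∃ b ∈ Submodule.span ℂ {p : B | ∃ x y : B, p = x * y},
      Real.sqrt (cB.inner (a - b) (a - b)).re < ε)
    -- the involution of the tensor product *-algebra `A ⊗[ℂ] B`
    (st : A ⊗[ℂ] B → A ⊗[ℂ] B)
    (st_add : ∀ z w : A ⊗[ℂ] B, st (z + w) = st z + st w)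
    (st_tmul : ∀ (x : A) (y : B), st (x ⊗ₜ[ℂ] y) = star x ⊗ₜ[ℂ] star y)
    -- the sesquilinear form `Bf` on `A ⊗[ℂ] B` determined by the inner products of the factors
    (Bf : A ⊗[ℂ] B → A ⊗[ℂ] B → ℂ)
    (Bf_add_left : ∀ z z' w : A ⊗[ℂ] B, Bf (z + z') w = Bf z w + Bf z' w)
    (Bf_add_right : ∀ z w w' : A ⊗[ℂ] B, Bf z (w + w') = Bf z w + Bf z w')
    (Bf_smul_left : ∀ (c : ℂ) (z w : A ⊗[ℂ] B), Bf (c • z) w = conj c * Bf z w)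
    (Bf_smul_right : ∀ (c : ℂ) (z w : A ⊗[ℂ] B), Bf z (c • w) = c * Bf z w)
    (Bf_tmul : ∀ (x x' : A) (y y' : B),
      Bf (x ⊗ₜ[ℂ] y) (x' ⊗ₜ[ℂ] y') = cA.inner x x' * cB.inner y y') :
    -- `Bf` is a Hermitian, positive-definite inner product on `A ⊗[ℂ] B`:
    (∀ z w : A ⊗[ℂ] B, conj (Bf w z) = Bf z w) ∧
    (∀ z : A ⊗[ℂ] B, 0 ≤ (Bf z z).re) ∧
    (∀ z : A ⊗[ℂ] B, Bf z z = 0 → z = 0) ∧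
    -- (1) every left multiplication is bounded for the norm induced by `Bf`:
    (∀ z : A ⊗[ℂ] B, ∃ C : ℝ, 0 ≤ C ∧ ∀ w : A ⊗[ℂ] B,
      Real.sqrt (Bf (z * w) (z * w)).re ≤ C * Real.sqrt (Bf w w).re) ∧
    -- (2) `Bf (z*w) v = Bf w (z* * v)`:
    (∀ z w v : A ⊗[ℂ] B, Bf (z * w) v = Bf w (st z * v)) ∧
    -- (3) `Bf z w = Bf w* z*`:
    (∀ z w : A ⊗[ℂ] B, Bf z w = Bf (st w) (st z)) ∧
    -- (4) the linear span of products is dense for the norm induced by `Bf`: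
    (∀ ζ : A ⊗[ℂ] B, ∀ ε : ℝ, 0 < ε →
      ∃ w ∈ Submodule.span ℂ {p : A ⊗[ℂ] B | ∃ z z' : A ⊗[ℂ] B, p = z * z'},
        Real.sqrt (Bf (ζ - w) (ζ - w)).re < ε) :=
  stmt_0_general cA cB hA1 hB1 hA2 hB2 hA3 hB3 hA4 hB4 st st_add st_tmul Bf Bf_add_left Bf_add_right
    Bf_tmul
end

section
/- Let (A₀, ⟪·,·⟫₁) and (B₀, ⟪·,·⟫₂) be Hilbert algebras over ℂ, and let B be the sesquilinear form on the tensor product *-algebra A₀ ⊗[ℂ] B₀ determined by B(x ⊗ y, x' ⊗ y') = ⟪x, x'⟫₁⟪y, y'⟫₂ (an inner product), with induced norm ‖·‖_B. Then for every z ∈ A₀ ⊗[ℂ] B₀ there exists a constant C ≥ 0 such that ‖zw‖_B ≤ C ‖w‖_B for all w ∈ A₀ ⊗[ℂ] B₀; that is, every left multiplication operator on A₀ ⊗[ℂ] B₀ is bounded for ‖·‖_B. -/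
/-! Both `Bf` and Mathlib's inner product on `A ⊗[ℂ] B` are biadditive and agree on simple tensors,
so they coincide. For this inner product, left multiplication by `x ⊗ y` is the tensor product
`L_x ⊗ L_y` of the bounded left multiplications of the factors, of norm at most `‖L_x‖ * ‖L_y‖`,
and a general `z` is a finite sum of simple tensors. -/

open scoped TensorProduct ComplexConjugate
open scoped InnerProductSpace

theorem TensorProduct.eq_inner_of_tmul {𝕜 E F : Type*} [RCLike 𝕜]
    [NormedAddCommGroup E] [InnerProductSpace 𝕜 E] [NormedAddCommGroup F] [InnerProductSpace 𝕜 F]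
    {Φ : E ⊗[𝕜] F → E ⊗[𝕜] F → 𝕜} (hadd_left : ∀ z z' w, Φ (z + z') w = Φ z w + Φ z' w)
    (hadd_right : ∀ z w w', Φ z (w + w') = Φ z w + Φ z w')
    (htmul : ∀ x x' y y', Φ (x ⊗ₜ y) (x' ⊗ₜ y') = ⟪x, x'⟫_𝕜 * ⟪y, y'⟫_𝕜) (z w : E ⊗[𝕜] F) :
    Φ z w = ⟪z, w⟫_𝕜 := by
  have zero_left (w) : Φ 0 w = 0 := by simpa using hadd_left 0 0 w
  have zero_right (z) : Φ z 0 = 0 := by simpa using hadd_right z 0 0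
  induction z using TensorProduct.induction_on generalizing w with
  | zero => rw [zero_left, inner_zero_left]
  | add z₁ z₂ h₁ h₂ => rw [hadd_left, inner_add_left, h₁, h₂]
  | tmul x y =>
    induction w using TensorProduct.induction_on with
    | zero => rw [zero_right, inner_zero_right]
    | add w₁ w₂ h₁ h₂ => rw [hadd_right, inner_add_right, h₁, h₂]
    | tmul x' y' => rw [htmul, inner_tmul]

theorem stmt_3_general
    {A B : Type*}
    [NonUnitalRing A] [Module ℂ A] [SMulCommClass ℂ A A] [IsScalarTower ℂ A A]
    [NonUnitalRing B] [Module ℂ B] [SMulCommClass ℂ B B] [IsScalarTower ℂ B B]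
    -- the inner products of the two Hilbert algebras
    (cA : InnerProductSpace.Core ℂ A) (cB : InnerProductSpace.Core ℂ B)
    -- Hilbert algebra axiom (1): left multiplications are continuous (bounded)
    (hA1 : ∀ x : A, ∃ C : ℝ, 0 ≤ C ∧ ∀ y : A,
      Real.sqrt (cA.inner (x * y) (x * y)).re ≤ C * Real.sqrt (cA.inner y y).re)
    (hB1 : ∀ x : B, ∃ C : ℝ, 0 ≤ C ∧ ∀ y : B,
      Real.sqrt (cB.inner (x * y) (x * y)).re ≤ C * Real.sqrt (cB.inner y y).re)
    -- the sesquilinear form `Bf` on `A ⊗[ℂ] B` determined by the inner products of the factors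
    (Bf : A ⊗[ℂ] B → A ⊗[ℂ] B → ℂ)
    (Bf_add_left : ∀ z z' w : A ⊗[ℂ] B, Bf (z + z') w = Bf z w + Bf z' w)
    (Bf_add_right : ∀ z w w' : A ⊗[ℂ] B, Bf z (w + w') = Bf z w + Bf z w')
    (Bf_tmul : ∀ (x x' : A) (y y' : B),
      Bf (x ⊗ₜ[ℂ] y) (x' ⊗ₜ[ℂ] y') = cA.inner x x' * cB.inner y y') :
    ∀ z : A ⊗[ℂ] B, ∃ C : ℝ, 0 ≤ C ∧ ∀ w : A ⊗[ℂ] B,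
      Real.sqrt (Bf (z * w) (z * w)).re ≤ C * Real.sqrt (Bf w w).re := by
  let := cA.toNormedAddCommGroup
  let := InnerProductSpace.ofCore cA.toCore
  let := cB.toNormedAddCommGroup
  let := InnerProductSpace.ofCore cB.toCore
  have hBf : Bf = inner ℂ := funext₂ <|
    TensorProduct.eq_inner_of_tmul Bf_add_left Bf_add_right Bf_tmul
  let LA (x : A) : A →L[ℂ] A :=
    (LinearMap.mulLeft ℂ x).mkContinuousOfExistsBound ((hA1 x).imp fun _ hC => hC.2)
  let LB (y : B) : B →L[ℂ] B :=
    (LinearMap.mulLeft ℂ y).mkContinuousOfExistsBound ((hB1 y).imp fun _ hC => hC.2)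
  have tmul_mul (x : A) (y : B) (w : A ⊗[ℂ] B) :
      x ⊗ₜ y * w = TensorProduct.mapL (LA x) (LB y) w := by
    rw [TensorProduct.mapL_apply]
    exact LinearMap.congr_fun (LinearMap.mulLeft_tmul (R := ℂ) x y) w
  -- `‖·‖` on `A ⊗[ℂ] B` is the norm `√(re ⟪·, ·⟫)` of Mathlib's tensor inner product.
  suffices ∀ z : A ⊗[ℂ] B, ∃ C, 0 ≤ C ∧ ∀ w, ‖z * w‖ ≤ C * ‖w‖ from hBf ▸ this
  intro z
  induction z using TensorProduct.induction_on with
  | zero => exact ⟨0, le_rfl, fun w => by simp⟩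
  | tmul x y =>
    refine ⟨‖LA x‖ * ‖LB y‖, by positivity, fun w => ?_⟩
    rw [tmul_mul]
    exact (TensorProduct.mapL (LA x) (LB y)).le_of_opNorm_le
      (TensorProduct.norm_mapL_le (LA x) (LB y)) w
  | add z₁ z₂ h₁ h₂ =>
    obtain ⟨C₁, hC₁, h₁⟩ := h₁
    obtain ⟨C₂, hC₂, h₂⟩ := h₂
    refine ⟨C₁ + C₂, add_nonneg hC₁ hC₂, fun w => ?_⟩
    rw [add_mul, add_mul]
    exact (norm_add_le _ _).trans (add_le_add (h₁ w) (h₂ w))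

/-- For Hilbert algebras `A` and `B` over `ℂ` and the inner product `Bf` on the
tensor product *-algebra `A ⊗[ℂ] B` determined by
`Bf (x ⊗ y) (x' ⊗ y') = ⟪x, x'⟫₁ * ⟪y, y'⟫₂`, with induced norm `‖z‖_B = √(Bf z z).re`,
every left multiplication operator `w ↦ z * w` on `A ⊗[ℂ] B` is bounded for `‖·‖_B`. -/
theorem stmt_3
    {A B : Type*}
    [NonUnitalRing A] [Module ℂ A] [SMulCommClass ℂ A A] [IsScalarTower ℂ A A]
    [StarRing A] [StarModule ℂ A]
    [NonUnitalRing B] [Module ℂ B] [SMulCommClass ℂ B B] [IsScalarTower ℂ B B]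
    [StarRing B] [StarModule ℂ B]
    -- the inner products of the two Hilbert algebras
    (cA : InnerProductSpace.Core ℂ A) (cB : InnerProductSpace.Core ℂ B)
    -- Hilbert algebra axiom (1): left multiplications are continuous (bounded)
    (hA1 : ∀ x : A, ∃ C : ℝ, 0 ≤ C ∧ ∀ y : A,
      Real.sqrt (cA.inner (x * y) (x * y)).re ≤ C * Real.sqrt (cA.inner y y).re)
    (hB1 : ∀ x : B, ∃ C : ℝ, 0 ≤ C ∧ ∀ y : B,
      Real.sqrt (cB.inner (x * y) (x * y)).re ≤ C * Real.sqrt (cB.inner y y).re)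
    -- Hilbert algebra axiom (2): ⟪xy, z⟫ = ⟪y, x*z⟫
    (hA2 : ∀ x y z : A, cA.inner (x * y) z = cA.inner y (star x * z))
    (hB2 : ∀ x y z : B, cB.inner (x * y) z = cB.inner y (star x * z))
    -- Hilbert algebra axiom (3): ⟪x, y⟫ = ⟪y*, x*⟫
    (hA3 : ∀ x y : A, cA.inner x y = cA.inner (star y) (star x))
    (hB3 : ∀ x y : B, cB.inner x y = cB.inner (star y) (star x))
    -- Hilbert algebra axiom (4): the span of products is dense
    (hA4 : ∀ a : A, ∀ ε : ℝ, 0 < ε → ∃ b ∈ Submodule.span ℂ {p : A | ∃ x y : A, p = x * y},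
      Real.sqrt (cA.inner (a - b) (a - b)).re < ε)
    (hB4 : ∀ a : B, ∀ ε : ℝ, 0 < ε → ∃ b ∈ Submodule.span ℂ {p : B | ∃ x y : B, p = x * y},
      Real.sqrt (cB.inner (a - b) (a - b)).re < ε)
    -- the involution of the tensor product *-algebra `A ⊗[ℂ] B`
    (st : A ⊗[ℂ] B → A ⊗[ℂ] B)
    (st_add : ∀ z w : A ⊗[ℂ] B, st (z + w) = st z + st w)
    (st_tmul : ∀ (x : A) (y : B), st (x ⊗ₜ[ℂ] y) = star x ⊗ₜ[ℂ] star y)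
    -- the sesquilinear form `Bf` on `A ⊗[ℂ] B` determined by the inner products of the factors
    (Bf : A ⊗[ℂ] B → A ⊗[ℂ] B → ℂ)
    (Bf_add_left : ∀ z z' w : A ⊗[ℂ] B, Bf (z + z') w = Bf z w + Bf z' w)
    (Bf_add_right : ∀ z w w' : A ⊗[ℂ] B, Bf z (w + w') = Bf z w + Bf z w')
    (Bf_smul_left : ∀ (c : ℂ) (z w : A ⊗[ℂ] B), Bf (c • z) w = conj c * Bf z w)
    (Bf_smul_right : ∀ (c : ℂ) (z w : A ⊗[ℂ] B), Bf z (c • w) = c * Bf z w)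
    (Bf_tmul : ∀ (x x' : A) (y y' : B),
      Bf (x ⊗ₜ[ℂ] y) (x' ⊗ₜ[ℂ] y') = cA.inner x x' * cB.inner y y')
    -- `Bf` is an inner product
    (Bf_conj_symm : ∀ z w : A ⊗[ℂ] B, conj (Bf w z) = Bf z w)
    (Bf_nonneg : ∀ z : A ⊗[ℂ] B, 0 ≤ (Bf z z).re)
    (Bf_definite : ∀ z : A ⊗[ℂ] B, Bf z z = 0 → z = 0) :
    ∀ z : A ⊗[ℂ] B, ∃ C : ℝ, 0 ≤ C ∧ ∀ w : A ⊗[ℂ] B,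
      Real.sqrt (Bf (z * w) (z * w)).re ≤ C * Real.sqrt (Bf w w).re :=
  stmt_3_general cA cB hA1 hB1 Bf Bf_add_left Bf_add_right Bf_tmul
end

section
/- Let H₁, H₂, K₁, K₂ be complex Hilbert spaces with H₁ ≠ {0} and H₂ ≠ {0}, and let S : H₁ → K₁ and T : H₂ → K₂ be bounded linear operators. Let H₁ ⊗̂ H₂ and K₁ ⊗̂ K₂ denote the Hilbert space completions of the algebraic tensor products with respect to the norms induced by the tensor-product inner products. Then there exists a unique bounded linear operator S ⊗̂ T : H₁ ⊗̂ H₂ → K₁ ⊗̂ K₂ such that (S ⊗̂ T)(ξ ⊗ η) = Sξ ⊗ Tη for all ξ ∈ H₁, η ∈ H₂, and its operator norm satisfies ‖S ⊗̂ T‖ = ‖S‖ · ‖T‖. -/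
/-!
The algebraic tensor product `E ⊗[𝕜] F` of inner product spaces carries the inner product
`⟪x ⊗ y, x' ⊗ y'⟫ = ⟪x, x'⟫ * ⟪y, y'⟫`, so a bilinear map multiplying inner products lifts to a
linear isometry out of it; for `ι₁` its range is dense in `H₁ ⊗̂ H₂`. The operator `S ⊗̂ T` is the
extension by continuity of `ι₂ ∘ (S ⊗ T)` along this isometry. Extending along a dense isometry
preserves the operator norm, and `‖S ⊗ T‖ = ‖S‖ * ‖T‖` on the algebraic tensor product, the lower
bound being read off elementary tensors.
-/

open scoped TensorProduct

namespace ContinuousLinearMap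

variable {𝕜 E F G H : Type*} [NontriviallyNormedField 𝕜]
  [SeminormedAddCommGroup E] [NormedSpace 𝕜 E] [SeminormedAddCommGroup F] [NormedSpace 𝕜 F]
  [SeminormedAddCommGroup G] [NormedSpace 𝕜 G] [SeminormedAddCommGroup H] [NormedSpace 𝕜 H]

theorem mul_opNorm_le_of_bound (f : E →L[𝕜] F) {a C : ℝ} (ha : 0 ≤ a) (hC : 0 ≤ C)
    (h : ∀ x, a * ‖f x‖ ≤ C * ‖x‖) : a * ‖f‖ ≤ C := by
  obtain rfl | ha := ha.eq_or_lt
  · simpa using hC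
  rw [← le_div_iff₀' ha]
  refine f.opNorm_le_bound (by positivity) fun x => ?_
  rw [div_mul_eq_mul_div, le_div_iff₀' ha]
  exact h x

theorem opNorm_mul_opNorm_le_of_bound (f : E →L[𝕜] F) (g : G →L[𝕜] H) {C : ℝ} (hC : 0 ≤ C)
    (h : ∀ x y, ‖f x‖ * ‖g y‖ ≤ C * (‖x‖ * ‖y‖)) : ‖f‖ * ‖g‖ ≤ C := by
  refine g.mul_opNorm_le_of_bound (norm_nonneg f) hC fun y => ?_
  rw [mul_comm]
  exact f.mul_opNorm_le_of_bound (norm_nonneg _) (by positivity) fun x => by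
    linarith [h x y]

end ContinuousLinearMap

theorem ContinuousLinearMap.opNorm_extend_linearIsometry {𝕜 E Eₗ F : Type*}
    [NontriviallyNormedField 𝕜] [NormedAddCommGroup E] [NormedSpace 𝕜 E]
    [NormedAddCommGroup Eₗ] [NormedSpace 𝕜 Eₗ] [NormedAddCommGroup F] [NormedSpace 𝕜 F]
    [CompleteSpace F] (f : E →L[𝕜] F) (e : E →ₗᵢ[𝕜] Eₗ) (he : DenseRange e) :
    ‖f.extend e.toContinuousLinearMap‖ = ‖f‖ := by
  refine le_antisymm ?_ ?_
  · simpa using f.opNorm_extend_le (N := 1) he (by simp)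
  · refine f.opNorm_le_bound (norm_nonneg _) fun x => ?_
    rw [← f.extend_eq (e := e.toContinuousLinearMap) he e.isometry.isUniformInducing x,
      ← e.norm_map x]
    exact le_opNorm _ _

theorem TensorProduct.range_lift {R M N P : Type*} [CommSemiring R] [AddCommMonoid M] [Module R M]
    [AddCommMonoid N] [Module R N] [AddCommMonoid P] [Module R P] (Φ : M →ₗ[R] N →ₗ[R] P) :
    LinearMap.range (lift Φ) = Submodule.span R {z | ∃ x y, z = Φ x y} := by
  rw [LinearMap.range_eq_map, ← span_tmul_eq_top, Submodule.map_span]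
  congr 1
  ext z
  simp [eq_comm]

namespace TensorProduct

variable {𝕜 E F G H : Type*} [RCLike 𝕜]
  [NormedAddCommGroup E] [InnerProductSpace 𝕜 E]
  [NormedAddCommGroup F] [InnerProductSpace 𝕜 F]
  [NormedAddCommGroup G] [InnerProductSpace 𝕜 G]
  [NormedAddCommGroup H] [InnerProductSpace 𝕜 H]

theorem norm_mapL (f : E →L[𝕜] F) (g : G →L[𝕜] H) : ‖mapL f g‖ = ‖f‖ * ‖g‖ := by
  refine (norm_mapL_le f g).antisymm <|
    f.opNorm_mul_opNorm_le_of_bound g (norm_nonneg _) fun x y => ?_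
  simpa [mapL_tmul] using (mapL f g).le_opNorm (x ⊗ₜ y)

theorem inner_lift_lift {Φ : E →ₗ[𝕜] F →ₗ[𝕜] G}
    (hΦ : ∀ x x' y y', inner 𝕜 (Φ x y) (Φ x' y') = inner 𝕜 x x' * inner 𝕜 y y')
    (s t : E ⊗[𝕜] F) : inner 𝕜 (lift Φ s) (lift Φ t) = inner 𝕜 s t := by
  induction s using TensorProduct.induction_on with
  | zero => simp
  | add s s' hs hs' => simp only [map_add, inner_add_left, hs, hs']
  | tmul x y =>
    induction t using TensorProduct.induction_on with
    | zero => simp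
    | add t t' ht ht' => simp only [map_add, inner_add_right, ht, ht']
    | tmul x' y' => simp only [lift.tmul, hΦ, inner_tmul]

noncomputable def liftIsometry (Φ : E →ₗ[𝕜] F →ₗ[𝕜] G)
    (hΦ : ∀ x x' y y', inner 𝕜 (Φ x y) (Φ x' y') = inner 𝕜 x x' * inner 𝕜 y y') :
    E ⊗[𝕜] F →ₗᵢ[𝕜] G :=
  (lift Φ).isometryOfInner (inner_lift_lift hΦ)

end TensorProduct

theorem stmt_10_general
    {H₁ H₂ K₁ K₂ HH KK : Type*}
    [NormedAddCommGroup H₁] [InnerProductSpace ℂ H₁]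
    [NormedAddCommGroup H₂] [InnerProductSpace ℂ H₂]
    [NormedAddCommGroup K₁] [InnerProductSpace ℂ K₁]
    [NormedAddCommGroup K₂] [InnerProductSpace ℂ K₂]
    [NormedAddCommGroup HH] [InnerProductSpace ℂ HH]
    [NormedAddCommGroup KK] [InnerProductSpace ℂ KK] [CompleteSpace KK]
    -- `HH` is the Hilbert tensor product `H₁ ⊗̂ H₂`, with tensor map `ι₁`
    (ι₁ : H₁ →ₗ[ℂ] H₂ →ₗ[ℂ] HH)
    (hι₁inner : ∀ (ξ ξ' : H₁) (η η' : H₂),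
      (inner ℂ (ι₁ ξ η) (ι₁ ξ' η') : ℂ) = (inner ℂ ξ ξ' : ℂ) * (inner ℂ η η' : ℂ))
    (hι₁dense : Dense (↑(Submodule.span ℂ {z : HH | ∃ ξ η, z = ι₁ ξ η}) : Set HH))
    -- `KK` is the Hilbert tensor product `K₁ ⊗̂ K₂`, with tensor map `ι₂`
    (ι₂ : K₁ →ₗ[ℂ] K₂ →ₗ[ℂ] KK)
    (hι₂inner : ∀ (ξ ξ' : K₁) (η η' : K₂),
      (inner ℂ (ι₂ ξ η) (ι₂ ξ' η') : ℂ) = (inner ℂ ξ ξ' : ℂ) * (inner ℂ η η' : ℂ))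
    -- the bounded operators `S` and `T`
    (S : H₁ →L[ℂ] K₁) (T : H₂ →L[ℂ] K₂) :
    ∃ U : HH →L[ℂ] KK,
      (∀ (ξ : H₁) (η : H₂), U (ι₁ ξ η) = ι₂ (S ξ) (T η)) ∧
      ‖U‖ = ‖S‖ * ‖T‖ ∧
      ∀ V : HH →L[ℂ] KK, (∀ (ξ : H₁) (η : H₂), V (ι₁ ξ η) = ι₂ (S ξ) (T η)) → V = U := by
  set j := TensorProduct.liftIsometry ι₁ hι₁inner
  set k := TensorProduct.liftIsometry ι₂ hι₂inner
  have hj : DenseRange j := by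
    change Dense (Set.range (TensorProduct.lift ι₁))
    rwa [← LinearMap.coe_range, TensorProduct.range_lift]
  set U := (k.toContinuousLinearMap ∘L TensorProduct.mapL S T).extend j.toContinuousLinearMap
  have hU : ∀ ξ η, U (ι₁ ξ η) = ι₂ (S ξ) (T η) := fun ξ η =>
    ContinuousLinearMap.extend_eq (e := j.toContinuousLinearMap) _ hj j.isometry.isUniformInducing
      (ξ ⊗ₜ η)
  refine ⟨U, hU, ?_, fun V hV => ContinuousLinearMap.ext_on hι₁dense ?_⟩
  · rw [ContinuousLinearMap.opNorm_extend_linearIsometry _ _ hj,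
      k.norm_toContinuousLinearMap_comp, TensorProduct.norm_mapL]
  · rintro _ ⟨ξ, η, rfl⟩
    rw [hV, hU]

/-- Let `H₁, H₂, K₁, K₂` be complex Hilbert spaces with `H₁ ≠ {0}` and
`H₂ ≠ {0}`, and let `S : H₁ →L[ℂ] K₁`, `T : H₂ →L[ℂ] K₂` be bounded linear operators.  Let
`HH = H₁ ⊗̂ H₂` and `KK = K₁ ⊗̂ K₂` be the Hilbert space completions of the algebraic tensor
products with respect to the tensor-product inner products; they are presented abstractly as
Hilbert spaces together with bilinear tensor maps `ι₁`, `ι₂` that multiply inner products and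
have dense span.  Then there exists a unique bounded linear operator `U : HH →L[ℂ] KK` with
`U (ξ ⊗ η) = Sξ ⊗ Tη` for all `ξ, η`, and moreover `‖U‖ = ‖S‖ * ‖T‖`. -/
theorem stmt_10
    {H₁ H₂ K₁ K₂ HH KK : Type*}
    [NormedAddCommGroup H₁] [InnerProductSpace ℂ H₁] [CompleteSpace H₁] [Nontrivial H₁]
    [NormedAddCommGroup H₂] [InnerProductSpace ℂ H₂] [CompleteSpace H₂] [Nontrivial H₂]
    [NormedAddCommGroup K₁] [InnerProductSpace ℂ K₁] [CompleteSpace K₁]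
    [NormedAddCommGroup K₂] [InnerProductSpace ℂ K₂] [CompleteSpace K₂]
    [NormedAddCommGroup HH] [InnerProductSpace ℂ HH] [CompleteSpace HH]
    [NormedAddCommGroup KK] [InnerProductSpace ℂ KK] [CompleteSpace KK]
    -- `HH` is the Hilbert tensor product `H₁ ⊗̂ H₂`, with tensor map `ι₁`
    (ι₁ : H₁ →ₗ[ℂ] H₂ →ₗ[ℂ] HH)
    (hι₁inner : ∀ (ξ ξ' : H₁) (η η' : H₂),
      (inner ℂ (ι₁ ξ η) (ι₁ ξ' η') : ℂ) = (inner ℂ ξ ξ' : ℂ) * (inner ℂ η η' : ℂ))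
    (hι₁dense : Dense (↑(Submodule.span ℂ {z : HH | ∃ ξ η, z = ι₁ ξ η}) : Set HH))
    -- `KK` is the Hilbert tensor product `K₁ ⊗̂ K₂`, with tensor map `ι₂`
    (ι₂ : K₁ →ₗ[ℂ] K₂ →ₗ[ℂ] KK)
    (hι₂inner : ∀ (ξ ξ' : K₁) (η η' : K₂),
      (inner ℂ (ι₂ ξ η) (ι₂ ξ' η') : ℂ) = (inner ℂ ξ ξ' : ℂ) * (inner ℂ η η' : ℂ))
    (hι₂dense : Dense (↑(Submodule.span ℂ {z : KK | ∃ ξ η, z = ι₂ ξ η}) : Set KK))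
    -- the bounded operators `S` and `T`
    (S : H₁ →L[ℂ] K₁) (T : H₂ →L[ℂ] K₂) :
    ∃ U : HH →L[ℂ] KK,
      (∀ (ξ : H₁) (η : H₂), U (ι₁ ξ η) = ι₂ (S ξ) (T η)) ∧
      ‖U‖ = ‖S‖ * ‖T‖ ∧
      ∀ V : HH →L[ℂ] KK, (∀ (ξ : H₁) (η : H₂), V (ι₁ ξ η) = ι₂ (S ξ) (T η)) → V = U :=
  stmt_10_general ι₁ hι₁inner hι₁dense ι₂ hι₂inner S T
end
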